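/- The bivariate formal power series Q(x,y) = ∑ q(n,m) xⁿ yᵐ satisfies (y⁶ − x⁶ + 6y²x³ − 3y⁴ + 2x³ + 3y² − 1)Q³ + (x³y² − y⁴ + x³ + 2y² − 1)Q² + (x³ − y² + 1)Q + 1 = 0. -/

import Mathlib

/-- Relations of the modular group presentation ⟨U, S | U³, S²⟩:
`true` plays the role of `U`, `false` the role of `S`. -/
def modularRels : Set (FreeGroup Bool) :=
  {FreeGroup.of true ^ 3, FreeGroup.of false ^ 2}

/-- Γ = PSL₂(ℤ) presented as ⟨U, S | U³, S²⟩. -/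
abbrev ModularGroup' := PresentedGroup modularRels

/-- The letter map: `true ↦ U`, `false ↦ S`. -/
def letterΓ : Bool → ModularGroup' := fun b => PresentedGroup.of b

/-- The product in Γ of a word in the alphabet {U, S}. -/
def wordProd (l : List Bool) : ModularGroup' := (l.map letterΓ).prod

/-- `t n` is the number of words of length `n` in {U,S} equal to the identity in Γ. -/
noncomputable def t (n : ℕ) : ℕ :=
  Nat.card {w : Fin n → Bool // wordProd (List.ofFn w) = 1}

/-- `q n m` is the number of words in {U,S} with exactly `n` copies of `U` (= `true`)
and `m` copies of `S` (= `false`) that equal the identity in Γ. -/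
noncomputable def q (n m : ℕ) : ℕ :=
  Nat.card {l : List Bool // l.count true = n ∧ l.count false = m ∧ wordProd l = 1}

/-- The bivariate generating function Q(x,y) = ∑ q(n,m) xⁿ yᵐ, with `x` the
variable `0` and `y` the variable `1`. -/
noncomputable def Qser : MvPowerSeries (Fin 2) ℚ := fun d => (q (d 0) (d 1) : ℚ)

/-!
Γ = ℤ/3 ∗ ℤ/2, so every element has a unique normal form: an alternating sequence of the
syllables U, U² and S. Left multiplication by a letter acts on normal forms like a pushdown
automaton whose stack is the normal form, and a word is trivial in Γ iff, read from right to
left, it leads the empty stack back to the empty stack. Cutting a word at the first moment its topmost syllable is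
popped gives unambiguous grammars for the languages B, A, C of words first popping U², U, S and
for the trivial words Z:
  B = U + B C S,  A = B U + A C S,  C = S + C A U,  Z = 1 + Z A U + Z C S.
So the generating functions b, a, c, Q satisfy the same equations. Eliminating a and b leaves a
quadratic and a cubic equation for c, and eliminating c between them gives the cubic for Q.
-/

namespace Language

variable {α : Type*} {L M : Language α}

lemma mem_singleton {l l' : List α} : l ∈ ({l'} : Language α) ↔ l = l' := Iff.rfl

@[simp] lemma nil_notMem_mul_singleton {b : α} : [] ∉ L * {[b]} := by
  simp [mem_mul, mem_singleton]

@[simp] lemma concat_mem_singleton {l : List α} {b c : α} :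
    l ++ [b] ∈ ({[c]} : Language α) ↔ l = [] ∧ b = c := by
  simp [mem_singleton, List.append_eq_singleton_iff]

@[simp] lemma concat_mem_mul_singleton {l : List α} {b c : α} :
    l ++ [b] ∈ L * {[c]} ↔ l ∈ L ∧ b = c := by
  simp [mem_mul, mem_singleton, and_comm, eq_comm]

lemma ext_concat (hnil : [] ∈ L ↔ [] ∈ M) (hconcat : ∀ l b, l ++ [b] ∈ L ↔ l ++ [b] ∈ M) :
    L = M := by
  ext l
  rcases List.eq_nil_or_concat' l with rfl | ⟨l, b, rfl⟩
  exacts [hnil, hconcat l b]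

lemma disjoint_of_concat (hnil : [] ∈ L → [] ∉ M)
    (hconcat : ∀ l b, l ++ [b] ∈ L → l ++ [b] ∉ M) : Disjoint L M := by
  refine Set.disjoint_left.mpr fun l => ?_
  rcases List.eq_nil_or_concat' l with rfl | ⟨l, b, rfl⟩
  exacts [hnil, hconcat l b]

def SuffixFree (M : Language α) : Prop := ∀ u ∈ M, ∀ v ∈ M, u <:+ v → u = v

lemma suffixFree_singleton (l : List α) : SuffixFree ({l} : Language α) := by
  rintro u rfl v rfl -
  rfl

lemma SuffixFree.append_inj (hM : M.SuffixFree) {w w' v v' : List α} (hv : v ∈ M) (hv' : v' ∈ M)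
    (h : w ++ v = w' ++ v') : w = w' ∧ v = v' := by
  have hvv' : v = v' := by
    rcases List.suffix_or_suffix_of_suffix (h ▸ List.suffix_append w v) (List.suffix_append w' v')
      with hs | hs
    exacts [hM v hv v' hv' hs, (hM v' hv' v hv hs).symm]
  subst hvv'
  exact ⟨List.append_cancel_right h, rfl⟩

end Language

open MvPowerSeries

section GenFun

variable {α σ : Type*} [DecidableEq σ] (R : Type*) [Semiring R] (ι : α → σ)

noncomputable def wordDegree (l : List α) : σ →₀ ℕ := Multiset.toFinsupp (l.map ι : Multiset σ)

lemma wordDegree_append (l₁ l₂ : List α) :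
    wordDegree ι (l₁ ++ l₂) = wordDegree ι l₁ + wordDegree ι l₂ := by
  simp [wordDegree, ← Multiset.coe_add]

lemma finite_setOf_wordDegree_eq [Finite α] (d : σ →₀ ℕ) :
    {l | wordDegree ι l = d}.Finite := by
  refine (List.finite_length_eq α (d.sum fun _ => id)).subset fun l (hl : _ = d) => ?_
  simp [← hl, wordDegree]

noncomputable def genFun (L : Language α) : MvPowerSeries σ R :=
  fun d => {l ∈ L | wordDegree ι l = d}.ncard

variable {R ι}

lemma coeff_genFun (L : Language α) (d : σ →₀ ℕ) :
    coeff d (genFun R ι L) = {l ∈ L | wordDegree ι l = d}.ncard := rfl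

lemma genFun_singleton (l : List α) : genFun R ι {l} = monomial (wordDegree ι l) 1 := by
  ext d
  rw [coeff_genFun, coeff_monomial]
  by_cases h : d = wordDegree ι l
  · have : {l' ∈ ({l} : Language α) | wordDegree ι l' = d} = {l} :=
      Set.ext fun l' => ⟨And.left, fun hl' => ⟨hl', hl' ▸ h.symm⟩⟩
    rw [if_pos h, this, Set.ncard_singleton, Nat.cast_one]
  · have : {l' ∈ ({l} : Language α) | wordDegree ι l' = d} = ∅ :=
      Set.eq_empty_of_forall_notMem fun l' hl' => h (hl'.1 ▸ hl'.2).symm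
    rw [if_neg h, this, Set.ncard_empty, Nat.cast_zero]

lemma genFun_singleton_letter (a : α) : genFun R ι {[a]} = X (ι a) := by
  simp [genFun_singleton, wordDegree, X_def]

lemma genFun_one : genFun R ι 1 = 1 :=
  (genFun_singleton []).trans (by simp [wordDegree])

variable [Finite α]

lemma finite_sep_wordDegree_eq (L : Language α) (d : σ →₀ ℕ) :
    {l ∈ L | wordDegree ι l = d}.Finite :=
  (finite_setOf_wordDegree_eq ι d).subset fun _ hl => hl.2

lemma genFun_add {L M : Language α} (h : Disjoint L M) :
    genFun R ι (L + M) = genFun R ι L + genFun R ι M := by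
  ext d
  rw [map_add, coeff_genFun, coeff_genFun, coeff_genFun, ← Nat.cast_add,
    ← Set.ncard_union_eq (h.mono (fun _ hl => hl.1) (fun _ hl => hl.1))
      (finite_sep_wordDegree_eq L d) (finite_sep_wordDegree_eq M d)]
  congr 2
  ext l
  exact or_and_right

lemma genFun_mul {L M : Language α} (hM : M.SuffixFree) :
    genFun R ι (L * M) = genFun R ι L * genFun R ι M := by
  ext d
  simp_rw [coeff_mul, coeff_genFun, ← Nat.cast_mul, ← Nat.cast_sum]
  congr 1
  have (e : σ →₀ ℕ) := (finite_sep_wordDegree_eq (ι := ι) L e).to_subtype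
  have (e : σ →₀ ℕ) := (finite_sep_wordDegree_eq (ι := ι) M e).to_subtype
  simp_rw [← Nat.card_coe_set_eq, ← Nat.card_prod]
  rw [← Finset.sum_coe_sort, ← Nat.card_sigma]
  refine (Nat.card_congr (Equiv.ofBijective (fun x => ⟨x.2.1.1 ++ x.2.2.1,
    Language.append_mem_mul x.2.1.2.1 x.2.2.2.1, by
      rw [wordDegree_append, x.2.1.2.2, x.2.2.2.2]
      exact Finset.HasAntidiagonal.mem_antidiagonal.mp x.1.2⟩) ⟨?_, ?_⟩)).symm
  · rintro ⟨⟨e, he⟩, ⟨u, hu⟩, ⟨v, hv⟩⟩ ⟨⟨e', he'⟩, ⟨u', hu'⟩, ⟨v', hv'⟩⟩ h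
    obtain ⟨rfl, rfl⟩ := hM.append_inj hv.1 hv'.1 (congrArg Subtype.val h)
    obtain rfl : e = e' := Prod.ext (hu.2.symm.trans hu'.2) (hv.2.symm.trans hv'.2)
    rfl
  · rintro ⟨l, hl, hd⟩
    obtain ⟨u, hu, v, hv, rfl⟩ := Language.mem_mul.mp hl
    refine ⟨⟨⟨(wordDegree ι u, wordDegree ι v), ?_⟩, ⟨u, hu, rfl⟩, ⟨v, hv, rfl⟩⟩, rfl⟩
    rwa [Finset.HasAntidiagonal.mem_antidiagonal, ← wordDegree_append]

lemma genFun_mul_singleton_letter (L : Language α) (a : α) :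
    genFun R ι (L * {[a]}) = genFun R ι L * X (ι a) := by
  rw [genFun_mul (Language.suffixFree_singleton _), genFun_singleton_letter]

end GenFun

theorem MvPowerSeries.X_ne_zero {σ R : Type*} [Semiring R] [Nontrivial R] (i : σ) :
    (X i : MvPowerSeries σ R) ≠ 0 := fun h => by
  simpa using congrArg (coeff (Finsupp.single i 1)) h

theorem cubic_eq_zero_of_grammar_system {R : Type*} [CommRing R] [NoZeroDivisors R] [Nontrivial R]
    {x y a b c Q : R} (hb : b = x + b * c * y) (ha : a = b * x + a * c * y)
    (hc : c = y + c * a * x) (hQ : Q = 1 + Q * a * x + Q * c * y) (hy : y ≠ 0) :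
    (y ^ 6 - x ^ 6 + 6 * y ^ 2 * x ^ 3 - 3 * y ^ 4 + 2 * x ^ 3 + 3 * y ^ 2 - 1) * Q ^ 3 +
      (x ^ 3 * y ^ 2 - y ^ 4 + x ^ 3 + 2 * y ^ 2 - 1) * Q ^ 2 +
      (x ^ 3 - y ^ 2 + 1) * Q + 1 = 0 := by
  have hQ0 : Q ≠ 0 := by
    rintro rfl
    simp at hQ
  have ha' : a * (1 - c * y) ^ 2 = x ^ 2 := by linear_combination (1 - c * y) * ha + x * hb
  have hcubic : (c - y) * (1 - c * y) ^ 2 = c * x ^ 3 := by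
    linear_combination (1 - c * y) ^ 2 * hc + c * x * ha'
  have hquad : Q * y * (1 - c ^ 2) = c := by linear_combination c * hQ - Q * hc
  set α := 1 + (3 + y ^ 2) * Q
  set β := 1 + (2 + y ^ 2) * Q + (1 + 3 * y ^ 2 - x ^ 3) * Q ^ 2
  -- `hcubic` reduced modulo the quadratic `hquad`
  have hlin : β * c = y * Q * α := by
    have : y ^ 2 * (β * c - y * Q * α) = 0 := by
      linear_combination (Q * y) ^ 2 * hcubic +
        (Q * y * y ^ 2 * c - Q * y * (2 * y + y ^ 3) - y ^ 2) * hquad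
    simpa [hy, sub_eq_zero] using this
  have : y * Q ^ 2 * ((y ^ 6 - x ^ 6 + 6 * y ^ 2 * x ^ 3 - 3 * y ^ 4 + 2 * x ^ 3 + 3 * y ^ 2 - 1) *
      Q ^ 3 + (x ^ 3 * y ^ 2 - y ^ 4 + x ^ 3 + 2 * y ^ 2 - 1) * Q ^ 2 +
      (x ^ 3 - y ^ 2 + 1) * Q + 1) = 0 := by
    -- `β ^ 2 * hquad` with `β * c` replaced by `y * Q * α`
    linear_combination -(Q * y * (β * c + y * Q * α) + β) * hlin - β ^ 2 * hquad
  simpa [hy, hQ0] using this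

inductive Syllable
  | u1 | u2 | s

namespace Syllable

def toΓ : Syllable → ModularGroup'
  | u1 => letterΓ true
  | u2 => letterΓ true ^ 2
  | s => letterΓ false

def isU : Syllable → Bool
  | s => false
  | _ => true

end Syllable

open Syllable

/-- Left multiplication by a letter on normal forms, the head being the leftmost syllable. -/
def leftMul : Bool → List Syllable → List Syllable
  | true, [] => [u1]
  | true, u1 :: t => u2 :: t
  | true, u2 :: t => t
  | true, s :: t => u1 :: s :: t
  | false, s :: t => t
  | false, st => s :: st

def leftMulWord (l : List Bool) (st : List Syllable) : List Syllable := l.foldr leftMul st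

@[simp] lemma leftMulWord_nil (st : List Syllable) : leftMulWord [] st = st := rfl

@[simp] lemma leftMulWord_cons (b : Bool) (l : List Bool) (st : List Syllable) :
    leftMulWord (b :: l) st = leftMul b (leftMulWord l st) := rfl

lemma leftMulWord_append (l₁ l₂ : List Bool) (st : List Syllable) :
    leftMulWord (l₁ ++ l₂) st = leftMulWord l₁ (leftMulWord l₂ st) := List.foldr_append

lemma leftMulWord_concat (l : List Bool) (b : Bool) (st : List Syllable) :
    leftMulWord (l ++ [b]) st = leftMulWord l (leftMul b st) := by
  rw [leftMulWord_append, leftMulWord_cons, leftMulWord_nil]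

def syllableProd (st : List Syllable) : ModularGroup' := (st.map toΓ).prod

lemma letterΓ_true_mul_self_mul_self : letterΓ true * letterΓ true * letterΓ true = 1 := by
  rw [← pow_three']
  exact PresentedGroup.one_of_mem (by simp [modularRels])

lemma letterΓ_false_mul_self : letterΓ false * letterΓ false = 1 := by
  rw [← sq]
  exact PresentedGroup.one_of_mem (by simp [modularRels])

lemma wordProd_cons (b : Bool) (l : List Bool) :
    wordProd (b :: l) = letterΓ b * wordProd l := List.prod_cons

lemma syllableProd_leftMul (b : Bool) (st : List Syllable) :
    syllableProd (leftMul b st) = letterΓ b * syllableProd st := by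
  cases b <;> rcases st with _ | ⟨_ | _ | _, t⟩ <;>
    simp [leftMul, syllableProd, toΓ, sq, ← mul_assoc, letterΓ_true_mul_self_mul_self,
      letterΓ_false_mul_self]

lemma syllableProd_leftMulWord (l : List Bool) (st : List Syllable) :
    syllableProd (leftMulWord l st) = wordProd l * syllableProd st := by
  induction l with
  | nil => simp [wordProd]
  | cons b l ih => rw [leftMulWord_cons, syllableProd_leftMul, ih, wordProd_cons, mul_assoc]

def IsAlternating (st : List Syllable) : Prop := st.IsChain fun a b => a.isU ≠ b.isU

lemma IsAlternating.leftMul {st : List Syllable} (h : IsAlternating st) (b : Bool) :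
    IsAlternating (leftMul b st) := by
  cases b <;> rcases st with _ | ⟨a, _ | ⟨a', t⟩⟩ <;> (try cases a) <;> (try cases a') <;>
    simp_all [_root_.leftMul, IsAlternating, List.isChain_cons_cons, isU]

lemma leftMul_false_leftMul_false {st : List Syllable} (h : IsAlternating st) :
    leftMul false (leftMul false st) = st := by
  rcases st with _ | ⟨a, _ | ⟨a', t⟩⟩ <;> (try cases a) <;> (try cases a') <;>
    simp_all [leftMul, IsAlternating, List.isChain_cons_cons, isU]

lemma leftMul_true_leftMul_true_leftMul_true {st : List Syllable} (h : IsAlternating st) :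
    leftMul true (leftMul true (leftMul true st)) = st := by
  rcases st with _ | ⟨a, _ | ⟨a', t⟩⟩ <;> (try cases a) <;> (try cases a') <;>
    simp_all [leftMul, IsAlternating, List.isChain_cons_cons, isU]

def NormalForm : Type := {st : List Syllable // IsAlternating st}

namespace NormalForm

def leftMul (b : Bool) (st : NormalForm) : NormalForm := ⟨_root_.leftMul b st.1, st.2.leftMul b⟩

lemma bijective_leftMul (b : Bool) : Function.Bijective (leftMul b) := by
  cases b
  · exact Function.Involutive.bijective fun st => Subtype.ext (leftMul_false_leftMul_false st.2)
  · refine Function.bijective_iff_has_inverse.mpr ⟨leftMul true ∘ leftMul true, ?_, ?_⟩ <;>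
      exact fun st => Subtype.ext (leftMul_true_leftMul_true_leftMul_true st.2)

noncomputable def leftMulPerm (b : Bool) : Equiv.Perm NormalForm :=
  Equiv.ofBijective _ (bijective_leftMul b)

lemma lift_leftMulPerm_of_mem_modularRels :
    ∀ r ∈ modularRels, FreeGroup.lift leftMulPerm r = 1 := by
  rintro r (rfl | rfl) <;> ext1 st <;> apply Subtype.ext
  · exact leftMul_true_leftMul_true_leftMul_true st.2
  · exact leftMul_false_leftMul_false st.2

noncomputable def action : ModularGroup' →* Equiv.Perm NormalForm :=
  PresentedGroup.toGroup lift_leftMulPerm_of_mem_modularRels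

lemma action_wordProd (l : List Bool) (st : NormalForm) :
    (action (wordProd l) st).1 = leftMulWord l st.1 := by
  induction l with
  | nil => rfl
  | cons b l ih =>
    rw [wordProd_cons, map_mul, Equiv.Perm.mul_apply, leftMulWord_cons, ← ih]
    simp [action, letterΓ, leftMulPerm, leftMul]

end NormalForm

theorem wordProd_eq_one_iff (l : List Bool) : wordProd l = 1 ↔ leftMulWord l [] = [] := by
  refine ⟨fun h => ?_, fun h => ?_⟩
  · have := NormalForm.action_wordProd l ⟨[], List.isChain_nil⟩
    rwa [h, map_one, eq_comm] at this
  · simpa [syllableProd, h] using (syllableProd_leftMulWord l []).symm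

lemma leftMul_append {st : List Syllable} (h : st ≠ []) (b : Bool) (t : List Syllable) :
    leftMul b (st ++ t) = leftMul b st ++ t := by
  cases b <;> rcases st with _ | ⟨_ | _ | _, _⟩ <;> first | contradiction | rfl

lemma leftMulWord_append_stack {l : List Bool} {st : List Syllable}
    (h : ∀ l', l' <:+ l → l'.length < l.length → leftMulWord l' st ≠ []) (t : List Syllable) :
    leftMulWord l (st ++ t) = leftMulWord l st ++ t := by
  induction l with
  | nil => rfl
  | cons b l ih =>
    have hl : ∀ l', l' <:+ l → l'.length < l.length → leftMulWord l' st ≠ [] := fun l' hs hlt =>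
      h l' (hs.trans (List.suffix_cons b l)) (by rw [List.length_cons]; omega)
    rw [leftMulWord_cons, leftMulWord_cons, ih hl,
      leftMul_append (h l (List.suffix_cons b l) (by simp))]

def emptyingWords (st : List Syllable) : Language Bool := {l | leftMulWord l st = []}

def firstEmptyingWords (st : List Syllable) : Language Bool :=
  {l | leftMulWord l st = [] ∧ ∀ l', l' <:+ l → l'.length < l.length → leftMulWord l' st ≠ []}

@[simp] lemma mem_emptyingWords {st : List Syllable} {l : List Bool} :
    l ∈ emptyingWords st ↔ leftMulWord l st = [] := Iff.rfl

lemma mem_firstEmptyingWords {st : List Syllable} {l : List Bool} :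
    l ∈ firstEmptyingWords st ↔ leftMulWord l st = [] ∧
      ∀ l', l' <:+ l → l'.length < l.length → leftMulWord l' st ≠ [] := Iff.rfl

lemma suffixFree_firstEmptyingWords (st : List Syllable) :
    (firstEmptyingWords st).SuffixFree := by
  intro u hu v hv huv
  by_contra hne
  exact hv.2 u huv (lt_of_le_of_ne huv.length_le fun h => hne (huv.eq_of_length h)) hu.1

lemma firstEmptyingWords_nil : firstEmptyingWords [] = 1 := by
  ext l
  rw [Language.mem_one]
  refine ⟨fun h => ?_, fun h => ⟨by rw [h]; rfl, by simp [h]⟩⟩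
  by_contra hne
  exact h.2 [] List.nil_suffix (List.length_pos_iff.mpr hne) rfl

lemma concat_mem_firstEmptyingWords {st : List Syllable} (hst : st ≠ []) {l : List Bool}
    {b : Bool} :
    l ++ [b] ∈ firstEmptyingWords st ↔ l ∈ firstEmptyingWords (leftMul b st) := by
  simp only [mem_firstEmptyingWords, leftMulWord_concat]
  refine and_congr_right fun _ => ⟨fun h t ht hlt => ?_, fun h l' hl' hlt => ?_⟩
  · simpa [leftMulWord_concat] using
      h (t ++ [b]) (List.suffix_concat_iff.mpr (Or.inr ⟨t, rfl, ht⟩)) (by simpa using hlt)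
  · rcases List.suffix_concat_iff.mp hl' with rfl | ⟨t, rfl, ht⟩
    · exact hst
    · simpa [leftMulWord_concat] using h t ht (by simpa using hlt)

lemma leftMulWord_cons_of_mem_firstEmptyingWords {τ : Syllable} {l : List Bool}
    (h : l ∈ firstEmptyingWords [τ]) (st : List Syllable) : leftMulWord l (τ :: st) = st := by
  simpa [h.1] using leftMulWord_append_stack h.2 st

lemma exists_append_mem_firstEmptyingWords {st : List Syllable} {l : List Bool}
    (h : ∃ l', l' <:+ l ∧ leftMulWord l' st = []) :
    ∃ w, ∃ v ∈ firstEmptyingWords st, w ++ v = l := by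
  classical
  obtain ⟨l', hl', hl'st⟩ := h
  have hn : ∃ n, ∃ v, v <:+ l ∧ leftMulWord v st = [] ∧ v.length = n := ⟨_, l', hl', hl'st, rfl⟩
  obtain ⟨v, ⟨w, rfl⟩, hv, hlen⟩ := Nat.find_spec hn
  refine ⟨w, v, ⟨hv, fun v' hv' hlt hv'st => ?_⟩, rfl⟩
  exact Nat.find_min hn (hlen ▸ hlt) ⟨v', hv'.trans (List.suffix_append w v), hv'st, rfl⟩

lemma exists_suffix_leftMulWord_singleton_eq_nil {τ : Syllable} {st : List Syllable}
    {l : List Bool} (h : leftMulWord l (τ :: st) = []) :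
    ∃ l', l' <:+ l ∧ leftMulWord l' [τ] = [] := by
  by_contra! hne
  rw [← List.singleton_append, leftMulWord_append_stack (fun l' hl' _ => hne l' hl')] at h
  exact hne l List.suffix_rfl (List.append_eq_nil_iff.mp h).1

lemma emptyingWords_cons (τ : Syllable) (st : List Syllable) :
    emptyingWords (τ :: st) = emptyingWords st * firstEmptyingWords [τ] := by
  ext l
  refine ⟨fun h => ?_, ?_⟩
  · obtain ⟨w, v, hv, rfl⟩ := exists_append_mem_firstEmptyingWords
      (exists_suffix_leftMulWord_singleton_eq_nil h)
    refine Language.append_mem_mul ?_ hv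
    simpa [leftMulWord_append, leftMulWord_cons_of_mem_firstEmptyingWords hv] using h
  · rintro ⟨w, hw, v, hv, rfl⟩
    rw [mem_emptyingWords, leftMulWord_append, leftMulWord_cons_of_mem_firstEmptyingWords hv]
    exact hw

lemma leftMulWord_cons_ne_nil_of_suffix {τ : Syllable} {st : List Syllable} (hst : st ≠ [])
    {v t : List Bool} (hv : v ∈ firstEmptyingWords [τ]) (ht : t <:+ v) :
    leftMulWord t (τ :: st) ≠ [] := by
  rcases ht.length_le.lt_or_eq with hlt | hlen
  · rw [← List.singleton_append,
      leftMulWord_append_stack (fun l' hl' hlt' => hv.2 l' (hl'.trans ht) (hlt'.trans hlt)) st]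
    simp [hst]
  · rwa [ht.eq_of_length hlen, leftMulWord_cons_of_mem_firstEmptyingWords hv]

lemma firstEmptyingWords_cons (τ : Syllable) {st : List Syllable} (hst : st ≠ []) :
    firstEmptyingWords (τ :: st) = firstEmptyingWords st * firstEmptyingWords [τ] := by
  ext l
  refine ⟨fun h => ?_, ?_⟩
  · obtain ⟨w, v, hv, rfl⟩ := exists_append_mem_firstEmptyingWords
      (exists_suffix_leftMulWord_singleton_eq_nil h.1)
    have hrun (w' : List Bool) : leftMulWord (w' ++ v) (τ :: st) = leftMulWord w' st := by
      rw [leftMulWord_append, leftMulWord_cons_of_mem_firstEmptyingWords hv]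
    refine Language.append_mem_mul ⟨(hrun w).symm.trans h.1, fun w' hw' hlt => ?_⟩ hv
    rw [← hrun]
    exact h.2 _ (List.suffix_append_self_iff.mpr hw') (by simpa using hlt)
  · rintro ⟨w, hw, v, hv, rfl⟩
    refine ⟨by rw [leftMulWord_append, leftMulWord_cons_of_mem_firstEmptyingWords hv, hw.1],
      fun l' hl' hlt => ?_⟩
    rcases List.suffix_or_suffix_of_suffix hl' (List.suffix_append w v) with hl'v | ⟨w', rfl⟩
    · exact leftMulWord_cons_ne_nil_of_suffix hst hv hl'v
    · rw [leftMulWord_append, leftMulWord_cons_of_mem_firstEmptyingWords hv]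
      exact hw.2 w' (List.suffix_append_self_iff.mp hl') (by simpa using hlt)

lemma concat_mem_emptyingWords {st : List Syllable} {l : List Bool} {b : Bool} :
    l ++ [b] ∈ emptyingWords st ↔ l ∈ emptyingWords (leftMul b st) := by
  simp [leftMulWord_concat]

lemma firstEmptyingWords_u2 : firstEmptyingWords [u2] =
    {[true]} + firstEmptyingWords [u2] * firstEmptyingWords [s] * {[false]} := by
  refine Language.ext_concat
    (by simp [mem_firstEmptyingWords, Language.mem_add, Language.mem_singleton]) fun l b => ?_
  rw [concat_mem_firstEmptyingWords (List.cons_ne_nil _ _)]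
  cases b
  · simp [leftMul, firstEmptyingWords_cons, Language.mem_add]
  · simp [leftMul, firstEmptyingWords_nil, Language.mem_add]

lemma firstEmptyingWords_u1 : firstEmptyingWords [u1] =
    firstEmptyingWords [u2] * {[true]} +
      firstEmptyingWords [u1] * firstEmptyingWords [s] * {[false]} := by
  refine Language.ext_concat (by simp [mem_firstEmptyingWords, Language.mem_add]) fun l b => ?_
  rw [concat_mem_firstEmptyingWords (List.cons_ne_nil _ _)]
  cases b
  · simp [leftMul, firstEmptyingWords_cons, Language.mem_add]
  · simp [leftMul, Language.mem_add]

lemma firstEmptyingWords_s : firstEmptyingWords [s] =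
    {[false]} + firstEmptyingWords [s] * firstEmptyingWords [u1] * {[true]} := by
  refine Language.ext_concat
    (by simp [mem_firstEmptyingWords, Language.mem_add, Language.mem_singleton]) fun l b => ?_
  rw [concat_mem_firstEmptyingWords (List.cons_ne_nil _ _)]
  cases b
  · simp [leftMul, firstEmptyingWords_nil, Language.mem_add]
  · simp [leftMul, firstEmptyingWords_cons, Language.mem_add]

lemma emptyingWords_nil : emptyingWords [] =
    1 + emptyingWords [] * firstEmptyingWords [u1] * {[true]} +
      emptyingWords [] * firstEmptyingWords [s] * {[false]} := by
  refine Language.ext_concat (by simp [Language.mem_add]) fun l b => ?_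
  rw [concat_mem_emptyingWords]
  cases b <;> simp [leftMul, emptyingWords_cons, Language.mem_add]

def letterVar : Bool → Fin 2
  | true => 0
  | false => 1

lemma wordDegree_letterVar_eq_iff {l : List Bool} {d : Fin 2 →₀ ℕ} :
    wordDegree letterVar l = d ↔ l.count true = d 0 ∧ l.count false = d 1 := by
  have hinj : Function.Injective letterVar := by decide
  have hcount (b : Bool) : wordDegree letterVar l (letterVar b) = l.count b := by
    simp [wordDegree, Multiset.toFinsupp_apply, List.count_map_of_injective _ _ hinj]
  rw [Finsupp.ext_iff, Fin.forall_fin_two, ← hcount true, ← hcount false]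
  rfl

lemma Qser_eq_genFun : Qser = genFun ℚ letterVar (emptyingWords []) := by
  ext d
  rw [coeff_genFun, ← Nat.card_coe_set_eq]
  refine congrArg Nat.cast (Nat.card_congr (Equiv.subtypeEquivRight fun l => ?_))
  change _ ↔ _ ∧ wordDegree letterVar l = d
  rw [wordProd_eq_one_iff, wordDegree_letterVar_eq_iff, mem_emptyingWords]
  exact and_rotate.symm

local notation "gf" => genFun ℚ letterVar

lemma genFun_firstEmptyingWords_u2 :
    gf (firstEmptyingWords [u2]) =
      X 0 + gf (firstEmptyingWords [u2]) * gf (firstEmptyingWords [s]) * X 1 := by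
  conv_lhs => rw [firstEmptyingWords_u2]
  rw [genFun_add (Language.disjoint_of_concat (by simp) (by simp)), genFun_mul_singleton_letter,
    genFun_mul (suffixFree_firstEmptyingWords _), genFun_singleton_letter]
  rfl

lemma genFun_firstEmptyingWords_u1 :
    gf (firstEmptyingWords [u1]) =
      gf (firstEmptyingWords [u2]) * X 0 +
        gf (firstEmptyingWords [u1]) * gf (firstEmptyingWords [s]) * X 1 := by
  conv_lhs => rw [firstEmptyingWords_u1]
  rw [genFun_add (Language.disjoint_of_concat (by simp) (by simp)), genFun_mul_singleton_letter,
    genFun_mul_singleton_letter, genFun_mul (suffixFree_firstEmptyingWords _)]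
  rfl

lemma genFun_firstEmptyingWords_s :
    gf (firstEmptyingWords [s]) =
      X 1 + gf (firstEmptyingWords [s]) * gf (firstEmptyingWords [u1]) * X 0 := by
  conv_lhs => rw [firstEmptyingWords_s]
  rw [genFun_add (Language.disjoint_of_concat (by simp) (by simp)), genFun_mul_singleton_letter,
    genFun_mul (suffixFree_firstEmptyingWords _), genFun_singleton_letter]
  rfl

lemma genFun_emptyingWords_nil :
    gf (emptyingWords []) =
      1 + gf (emptyingWords []) * gf (firstEmptyingWords [u1]) * X 0 +
        gf (emptyingWords []) * gf (firstEmptyingWords [s]) * X 1 := by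
  conv_lhs => rw [emptyingWords_nil]
  rw [genFun_add
      (Language.disjoint_of_concat (by simp [Language.mem_add]) (by simp [Language.mem_add])),
    genFun_add (Language.disjoint_of_concat (by simp) (by simp)), genFun_mul_singleton_letter,
    genFun_mul_singleton_letter, genFun_mul (suffixFree_firstEmptyingWords _),
    genFun_mul (suffixFree_firstEmptyingWords _), genFun_one]
  rfl

open MvPowerSeries in
theorem stmt9 :
    letI Xv : MvPowerSeries (Fin 2) ℚ := MvPowerSeries.X 0
    letI Yv : MvPowerSeries (Fin 2) ℚ := MvPowerSeries.X 1
    (Yv ^ 6 - Xv ^ 6 + 6 * Yv ^ 2 * Xv ^ 3 - 3 * Yv ^ 4 + 2 * Xv ^ 3 + 3 * Yv ^ 2 - 1) * Qser ^ 3 +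
      (Xv ^ 3 * Yv ^ 2 - Yv ^ 4 + Xv ^ 3 + 2 * Yv ^ 2 - 1) * Qser ^ 2 +
      (Xv ^ 3 - Yv ^ 2 + 1) * Qser + 1 = 0 := by
  rw [Qser_eq_genFun]
  exact cubic_eq_zero_of_grammar_system genFun_firstEmptyingWords_u2 genFun_firstEmptyingWords_u1
    genFun_firstEmptyingWords_s genFun_emptyingWords_nil (X_ne_zero 1)
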